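/- Let X be an infinite set. Then every set A ∈ 𝒫(X) belongs to some minimal cutset of 𝒫(X). -/
import Mathlib


/-- A cutset in 𝒫(X): a collection of subsets of X meeting every maximal chain. -/
def IsCutset {X : Type u} (C : Set (Set X)) : Prop :=
  ∀ M : Set (Set X), IsMaxChain (· ⊆ ·) M → (C ∩ M).Nonempty

section Helpers

variable {X : Type u}

/-- Any set comparable with all members of a maximal chain belongs to it. -/
lemma mem_of_forall_comp {M : Set (Set X)} (hM : IsMaxChain (· ⊆ ·) M)
    (S : Set X) (h : ∀ B ∈ M, S ⊆ B ∨ B ⊆ S) : S ∈ M := by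
  have hc : IsChain (· ⊆ ·) (insert S M) := hM.1.insert (fun b hb _ => h b hb)
  have heq := hM.2 hc (Set.subset_insert _ _)
  rw [heq]
  exact Set.mem_insert _ _

lemma empty_mem_maxChain {M : Set (Set X)} (hM : IsMaxChain (· ⊆ ·) M) :
    (∅ : Set X) ∈ M :=
  mem_of_forall_comp hM ∅ (fun B _ => Or.inl (Set.empty_subset B))

lemma univ_mem_maxChain {M : Set (Set X)} (hM : IsMaxChain (· ⊆ ·) M) :
    (Set.univ : Set X) ∈ M :=
  mem_of_forall_comp hM Set.univ (fun B _ => Or.inr (Set.subset_univ B))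

/-- A maximal chain exists. -/
lemma exists_maxChain_sets : ∃ M : Set (Set X), IsMaxChain (· ⊆ ·) M := by
  have hc : IsChain (· ⊆ ·) (∅ : Set (Set X)) := Set.pairwise_empty _
  obtain ⟨M, hM, -⟩ := hc.exists_maxChain
  exact ⟨M, hM⟩

/-- The threshold pair for a point `b` in a maximal chain: the union `B*` of all
members not containing `b` is in the chain, and so is `B* ∪ {b}`. -/
lemma threshold_pair {M : Set (Set X)} (hM : IsMaxChain (· ⊆ ·) M) (b : X) :
    ∃ B : Set X, B ∈ M ∧ insert b B ∈ M ∧ b ∉ B := by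
  classical
  set B : Set X := ⋃₀ {B ∈ M | b ∉ B} with hBdef
  have hbB : b ∉ B := by
    intro hb
    rcases Set.mem_sUnion.1 hb with ⟨T, hT, hbT⟩
    exact hT.2 hbT
  -- members containing b lie above B, others below
  have hup : ∀ T ∈ M, b ∈ T → B ⊆ T := by
    intro T hT hbT
    apply Set.sUnion_subset
    intro T' hT'
    have hne : T' ≠ T := by
      intro h; exact hT'.2 (h ▸ hbT)
    rcases hM.1 hT'.1 hT hne with h | h
    · exact h
    · exact absurd (h hbT) hT'.2
  have hdown : ∀ T ∈ M, b ∉ T → T ⊆ B := by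
    intro T hT hbT
    exact Set.subset_sUnion_of_mem ⟨hT, hbT⟩
  have hBM : B ∈ M := by
    apply mem_of_forall_comp hM
    intro T hT
    by_cases hbT : b ∈ T
    · exact Or.inl (hup T hT hbT)
    · exact Or.inr (hdown T hT hbT)
  have hBbM : insert b B ∈ M := by
    apply mem_of_forall_comp hM
    intro T hT
    by_cases hbT : b ∈ T
    · exact Or.inl (Set.insert_subset hbT (hup T hT hbT))
    · exact Or.inr ((hdown T hT hbT).trans (Set.subset_insert _ _))
  exact ⟨B, hBM, hBbM, hbB⟩

/-- Escape chains: given `p ∈ D`, `q ∉ D`, there is a maximal chain through `D`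
whose other members are either subsets of `D` missing `p`, or supersets of `D`
containing `q`. -/
lemma escape_chain (D : Set X) (p q : X) (hp : p ∈ D) (hq : q ∉ D) :
    ∃ M : Set (Set X), IsMaxChain (· ⊆ ·) M ∧ D ∈ M ∧
      ∀ S ∈ M, S = D ∨ (S ⊆ D ∧ p ∉ S) ∨ (D ⊆ S ∧ q ∈ S) := by
  classical
  set c : Set (Set X) := {D \ {p}, D, insert q D} with hc
  have h1 : D \ {p} ⊆ D := Set.diff_subset
  have h2 : D ⊆ insert q D := Set.subset_insert _ _
  have hchain : IsChain (· ⊆ ·) c := by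
    intro a ha b hb hne
    simp only [hc, Set.mem_insert_iff, Set.mem_singleton_iff] at ha hb
    rcases ha with rfl | rfl | rfl <;> rcases hb with rfl | rfl | rfl <;>
      first
        | exact absurd rfl hne
        | exact Or.inl h1
        | exact Or.inr h1
        | exact Or.inl h2
        | exact Or.inr h2
        | exact Or.inl (h1.trans h2)
        | exact Or.inr (h1.trans h2)
  obtain ⟨M, hM, hcM⟩ := hchain.exists_maxChain
  have hDm : D ∈ M := hcM (by simp [hc])
  have hDpm : D \ {p} ∈ M := hcM (by simp [hc])
  have hDqm : insert q D ∈ M := hcM (by simp [hc])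
  refine ⟨M, hM, hDm, ?_⟩
  intro S hS
  by_cases hSD : S = D
  · exact Or.inl hSD
  rcases hM.1 hS hDm hSD with hsub | hsup
  · -- S ⊆ D
    right; left
    refine ⟨hsub, ?_⟩
    intro hpS
    -- compare S with D \ {p}
    have hne' : S ≠ D \ {p} := by
      intro h
      rw [h] at hpS
      exact hpS.2 rfl
    rcases hM.1 hS hDpm hne' with h | h
    · exact (h hpS).2 rfl
    · -- D \ {p} ⊆ S and p ∈ S, so D ⊆ S, so S = D
      apply hSD
      apply Set.Subset.antisymm hsub
      intro x hx
      by_cases hxp : x = p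
      · exact hxp ▸ hpS
      · exact h ⟨hx, hxp⟩
  · -- D ⊆ S
    right; right
    refine ⟨hsup, ?_⟩
    by_contra hqS
    -- compare S with insert q D
    have hne' : S ≠ insert q D := by
      intro h
      exact hqS (h ▸ Set.mem_insert _ _)
    rcases hM.1 hS hDqm hne' with h | h
    · -- S ⊆ insert q D, q ∉ S, so S ⊆ D, so S = D
      apply hSD
      apply Set.Subset.antisymm _ hsup
      intro x hx
      rcases h hx with rfl | hxD
      · exact absurd hx hqS
      · exact hxD
    · exact hqS (h (Set.mem_insert _ _))

end Helpers

/-- Let X be an infinite set. Then every set A ∈ 𝒫(X) belongs to some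
minimal cutset of 𝒫(X) (a cutset no proper subcollection of which is a cutset). -/
theorem mem_minimal_cutset {X : Type u} [Infinite X] (A : Set X) :
    ∃ C : Set (Set X), A ∈ C ∧ IsCutset C ∧ ∀ C' ⊂ C, ¬ IsCutset C' := by
  classical
  by_cases h0 : A = ∅
  · -- C = {∅}
    subst h0
    refine ⟨{∅}, rfl, ?_, ?_⟩
    · intro M hM
      exact ⟨∅, rfl, empty_mem_maxChain hM⟩
    · intro C' hss hcut
      have hC' : C' = ∅ := by
        rcases Set.ssubset_singleton_iff.mp (by simpa using hss) with h
        exact h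
      obtain ⟨M, hM⟩ := exists_maxChain_sets (X := X)
      obtain ⟨e, he, -⟩ := hcut M hM
      rw [hC'] at he
      exact he
  by_cases h1 : A = Set.univ
  · -- C = {univ}
    subst h1
    refine ⟨{Set.univ}, rfl, ?_, ?_⟩
    · intro M hM
      exact ⟨Set.univ, rfl, univ_mem_maxChain hM⟩
    · intro C' hss hcut
      have hC' : C' = ∅ := by
        rcases Set.ssubset_singleton_iff.mp (by simpa using hss) with h
        exact h
      obtain ⟨M, hM⟩ := exists_maxChain_sets (X := X)
      obtain ⟨e, he, -⟩ := hcut M hM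
      rw [hC'] at he
      exact he
  -- main case: ∅ ⊊ A ⊊ univ
  obtain ⟨a₀, ha₀⟩ := Set.nonempty_iff_ne_empty.mpr h0
  obtain ⟨b₀, hb₀⟩ := Set.ne_univ_iff_exists_notMem A |>.mp h1
  have hab : a₀ ≠ b₀ := by
    intro h; exact hb₀ (h ▸ ha₀)
  set C : Set (Set X) := {B | (a₀ ∈ B ∧ b₀ ∉ B) ∨ (b₀ ∈ B ∧ a₀ ∉ B)} with hCdef
  have hAC : A ∈ C := Or.inl ⟨ha₀, hb₀⟩
  have hcut : IsCutset C := by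
    intro M hM
    obtain ⟨B, hBM, hBbM, hbB⟩ := threshold_pair hM b₀
    by_cases haB : a₀ ∈ B
    · exact ⟨B, Or.inl ⟨haB, hbB⟩, hBM⟩
    · refine ⟨insert b₀ B, Or.inr ⟨Set.mem_insert _ _, ?_⟩, hBbM⟩
      simp only [Set.mem_insert_iff]
      push_neg
      exact ⟨hab, haB⟩
  -- escape: for each D ∈ C there is a maximal chain meeting C only in D
  have hesc : ∀ D ∈ C, ∃ M : Set (Set X), IsMaxChain (· ⊆ ·) M ∧
      (∀ S, S ∈ C → S ∈ M → S = D) := by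
    intro D hD
    rcases hD with ⟨haD, hbD⟩ | ⟨hbD, haD⟩
    · obtain ⟨M, hM, -, htri⟩ := escape_chain D a₀ b₀ haD hbD
      refine ⟨M, hM, ?_⟩
      intro S hSC hSM
      rcases htri S hSM with h | ⟨hsub, hpa⟩ | ⟨hsup, hqb⟩
      · exact h
      · rcases hSC with ⟨ha, -⟩ | ⟨hb, -⟩
        · exact absurd ha hpa
        · exact absurd (hsub hb) hbD
      · rcases hSC with ⟨-, hb⟩ | ⟨-, ha⟩
        · exact absurd hqb hb
        · exact absurd (hsup haD) ha
    · obtain ⟨M, hM, -, htri⟩ := escape_chain D b₀ a₀ hbD haD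
      refine ⟨M, hM, ?_⟩
      intro S hSC hSM
      rcases htri S hSM with h | ⟨hsub, hpb⟩ | ⟨hsup, hqa⟩
      · exact h
      · rcases hSC with ⟨ha, -⟩ | ⟨hb, -⟩
        · exact absurd (hsub ha) haD
        · exact absurd hb hpb
      · rcases hSC with ⟨-, hb⟩ | ⟨-, ha⟩
        · exact absurd (hsup hbD) hb
        · exact absurd hqa ha
  refine ⟨C, hAC, hcut, ?_⟩
  intro C' hss hcut'
  obtain ⟨D, hDC, hDC'⟩ := Set.exists_of_ssubset hss
  obtain ⟨M, hM, honly⟩ := hesc D hDC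
  obtain ⟨e, heC', heM⟩ := hcut' M hM
  have : e = D := honly e (hss.subset heC') heM
  exact hDC' (this ▸ heC')
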